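/- Fix reals L < U, t > 0, ε > 0 and θ > 0, and set μ = U − L + 2t. Let x_1, x_2 ∈ [L, U] with d_E = |x_1 − x_2| ≤ 2t, let d_H be the Hamming distance between the DPBV encodings of x_1 and x_2, and define the estimator d̂_E = (μ/(2s)) · ((e^ε + 1)/(e^ε − 1))^2 · d_H − μ e^ε/(e^ε − 1)^2. Then Pr[ |d̂_E − d_E| ≥ θμ ] ≤ 2 · exp( −8 · ((e^ε − 1)/(e^ε + 1))^4 · s · θ^2 ). -/

import Mathlib

open MeasureTheory ProbabilityTheory Real

/-- The BV hash: `h_{r,t}(x) = 1` if `x ∈ [r - t, r + t]` and `0` otherwise. -/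
noncomputable def bvHash (t r x : ℝ) : ℕ := if x ∈ Set.Icc (r - t) (r + t) then 1 else 0

/-- The uniform probability measure on the interval `[a, b]`. -/
noncomputable def uniformIcc (a b : ℝ) : Measure ℝ :=
  (ENNReal.ofReal (b - a))⁻¹ • (volume.restrict (Set.Icc a b))

/-- A DPBV bit: the BV hash bit `bvHash t r x` XOR-ed with the flip indicator `flip ∈ {0,1}`. -/
noncomputable def dpbvBit (t r x flip : ℝ) : ℕ :=
  if flip = 1 then 1 - bvHash t r x else bvHash t r x

/-- The (random) Hamming distance between the DPBV encodings of `x₁` (with flips `f`) and `x₂`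
(with flips `g`): the number of coordinates in which they differ. -/
noncomputable def dpbvHammingDist (t : ℝ) {s : ℕ} {Ω : Type*}
    (r f g : Fin s → Ω → ℝ) (x₁ x₂ : ℝ) (ω : Ω) : ℕ :=
  (Finset.univ.filter fun i =>
    dpbvBit t (r i ω) x₁ (f i ω) ≠ dpbvBit t (r i ω) x₂ (g i ω)).card

/-- The (random) DPBV Euclidean distance estimator
`d̂_E = (μ/(2s)) · ((e^ε + 1)/(e^ε − 1))² · d_H − μ·e^ε/(e^ε − 1)²`. -/
noncomputable def dpbvEstimator (t μ ε : ℝ) {s : ℕ} {Ω : Type*}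
    (r f g : Fin s → Ω → ℝ) (x₁ x₂ : ℝ) (ω : Ω) : ℝ :=
  μ / (2 * s) * ((exp ε + 1) / (exp ε - 1)) ^ 2 * (dpbvHammingDist t r f g x₁ x₂ ω : ℝ)
    - μ * exp ε / (exp ε - 1) ^ 2

open Set
open scoped symmDiff

/-!
In coordinate `i` the two encodings differ exactly on `{r i ∈ D} ∆ ({f i = 1} ∆ {g i = 1})`,
where `D = [x₁ - t, x₁ + t] ∆ [x₂ - t, x₂ + t]` has length `2 d_E`. By independence this event has
probability `q (1 - π) + (1 - q) π`, with `q = 2 d_E / μ`, `π = 2 p (1 - p)` and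
`p = 1 / (e^ε + 1)`; the coordinates are independent since they depend on disjoint blocks
`(r i, f i, g i)` of the independent family. As `1 - 2π = ((e^ε - 1) / (e^ε + 1))²`, the estimator
`d̂_E` is an affine function of `d_H` with mean exactly `d_E`, and Hoeffding's inequality for the
`s` disagreement indicators gives the bound.
-/

namespace ProbabilityTheory

section Hoeffding
variable {Ω ι : Type*} [MeasurableSpace Ω] {P : Measure Ω} [IsProbabilityMeasure P] [Fintype ι]

lemma measureReal_abs_sum_sub_integral_ge_le {X : ι → Ω → ℝ} (hind : iIndepFun X P)
    (hX : ∀ i, AEMeasurable (X i) P) {a b : ℝ} (hab : ∀ i, ∀ᵐ ω ∂P, X i ω ∈ Icc a b)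
    {ε : ℝ} (hε : 0 ≤ ε) :
    P.real {ω | ε ≤ |∑ i, (X i ω - P[X i])|}
      ≤ 2 * exp (-2 * ε ^ 2 / (Fintype.card ι * (b - a) ^ 2)) := by
  have hind' : iIndepFun (fun i ω ↦ X i ω - P[X i]) P :=
    hind.comp (fun (i : ι) (x : ℝ) ↦ x - ∫ ω, X i ω ∂P) fun _ ↦ by fun_prop
  have hsub : HasSubgaussianMGF (fun ω ↦ ∑ i, (X i ω - P[X i]))
      (∑ _i : ι, (‖b - a‖₊ / 2) ^ 2) P :=
    HasSubgaussianMGF.sum_of_iIndepFun (X := fun i ω ↦ X i ω - P[X i]) (s := Finset.univ) hind'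
      fun i _ ↦ hasSubgaussianMGF_of_mem_Icc (hX i) (hab i)
  have hparam : -ε ^ 2 / (2 * ((∑ _i : ι, (‖b - a‖₊ / 2) ^ 2 : NNReal) : ℝ))
      = -2 * ε ^ 2 / (Fintype.card ι * (b - a) ^ 2) := by
    push_cast
    rw [Finset.sum_const, Finset.card_univ, nsmul_eq_mul, Real.norm_eq_abs, div_pow, sq_abs,
      show (2 : ℝ) * (Fintype.card ι * ((b - a) ^ 2 / 2 ^ 2)) = Fintype.card ι * (b - a) ^ 2 / 2 by
        ring, div_div_eq_mul_div]
    ring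
  calc P.real {ω | ε ≤ |∑ i, (X i ω - P[X i])|}
      ≤ P.real ({ω | ε ≤ ∑ i, (X i ω - P[X i])} ∪ {ω | ε ≤ -∑ i, (X i ω - P[X i])}) := by
        refine measureReal_mono fun ω hω ↦ ?_
        simpa only [mem_union, mem_ofPred_eq, le_abs] using hω
    _ ≤ _ := measureReal_union_le _ _
    _ ≤ 2 * exp (-2 * ε ^ 2 / (Fintype.card ι * (b - a) ^ 2)) := by
        rw [two_mul, ← hparam]
        exact add_le_add (hsub.measure_ge_le hε) (hsub.neg.measure_ge_le hε)

lemma measureReal_abs_sum_indicator_sub_ge_le {A : ι → Set Ω} (hA : ∀ i, MeasurableSet (A i))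
    (hind : iIndepFun (fun i ↦ (A i).indicator (1 : Ω → ℝ)) P) {ε : ℝ} (hε : 0 ≤ ε) :
    P.real {ω | ε ≤ |∑ i, ((A i).indicator 1 ω - P.real (A i))|}
      ≤ 2 * exp (-2 * ε ^ 2 / Fintype.card ι) := by
  have h01 : ∀ i, ∀ᵐ ω ∂P, (A i).indicator (1 : Ω → ℝ) ω ∈ Icc 0 1 := fun i ↦
    ae_of_all _ fun ω ↦ by by_cases h : ω ∈ A i <;> simp [h]
  simpa [integral_indicator_one (hA _)] using measureReal_abs_sum_sub_integral_ge_le hind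
    (fun i ↦ (measurable_const.indicator (hA i)).aemeasurable) h01 hε

end Hoeffding

section Blocks
variable {Ω ι : Type*} [MeasurableSpace Ω] {P : Measure Ω}

lemma iIndepFun.curry {κ : ι → Type*} {𝓧 : (i : ι) → κ i → Type*}
    [∀ i j, MeasurableSpace (𝓧 i j)] {X : (i : ι) → (j : κ i) → Ω → 𝓧 i j}
    (mX : ∀ i j, Measurable (X i j)) (h : iIndepFun (fun p : (i : ι) × κ i ↦ X p.1 p.2) P) :
    iIndepFun (fun i ω ↦ (X i · ω)) P := by
  have := h.isProbabilityMeasure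
  have : ∀ i j, IsProbabilityMeasure (P.map (X i j)) :=
    fun i j ↦ Measure.isProbabilityMeasure_map (mX i j).aemeasurable
  have hcurry : (MeasurableEquiv.piCurry 𝓧) ∘ (fun ω p ↦ X p.1 p.2 ω) = fun ω i j ↦ X i j ω := by
    ext; simp [Sigma.curry]
  have hblock : ∀ i, P.map (fun ω ↦ (X i · ω)) = Measure.infinitePi (fun j ↦ P.map (X i j)) :=
    fun i ↦ (h.precomp sigma_mk_injective).map_fun_eq_infinitePi_map (mX i)
  rw [iIndepFun_iff_map_fun_eq_infinitePi_map (by fun_prop), ← hcurry,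
    ← Measure.map_map (by fun_prop) (by fun_prop), h.map_fun_eq_infinitePi_map (fun p ↦ mX p.1 p.2),
    Measure.infinitePi_map_piCurry (fun i j ↦ P.map (X i j))]
  simp_rw [hblock]

lemma iIndepFun.fiberwise {J 𝓧 : Type*} [MeasurableSpace 𝓧] {Z : J → Ω → 𝓧}
    (mZ : ∀ j, Measurable (Z j)) (h : iIndepFun Z P) (φ : J → ι) :
    iIndepFun (fun i ω (j : {j // φ j = i}) ↦ Z j ω) P :=
  iIndepFun.curry (X := fun i (j : {j // φ j = i}) ↦ Z j) (fun _ j ↦ mZ j)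
    (h.precomp (Equiv.sigmaFiberEquiv φ).injective)

end Blocks

lemma IndepFun.measureReal_inter_preimage_eq_mul {Ω α β : Type*} [MeasurableSpace Ω]
    [MeasurableSpace α] [MeasurableSpace β] {P : Measure Ω} {X : Ω → α} {Y : Ω → β}
    (h : IndepFun X Y P) {S : Set α} {T : Set β} (hS : MeasurableSet S) (hT : MeasurableSet T) :
    P.real (X ⁻¹' S ∩ Y ⁻¹' T) = P.real (X ⁻¹' S) * P.real (Y ⁻¹' T) := by
  rw [measureReal_def, h.measure_inter_preimage_eq_mul S T hS hT, ENNReal.toReal_mul]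
  rfl

end ProbabilityTheory

def xorProb (a b : ℝ) : ℝ := a * (1 - b) + (1 - a) * b

lemma measureReal_symmDiff_eq_xorProb {Ω : Type*} [MeasurableSpace Ω] {P : Measure Ω}
    [IsProbabilityMeasure P] {E F : Set Ω} (hE : MeasurableSet E) (hF : MeasurableSet F)
    (h : P.real (E ∩ F) = P.real E * P.real F) :
    P.real (E ∆ F) = xorProb (P.real E) (P.real F) := by
  have hEF := measureReal_sdiff_add_inter (s := E) (μ := P) hF
  have hFE := measureReal_sdiff_add_inter (s := F) (μ := P) hE
  rw [inter_comm] at hFE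
  rw [measureReal_symmDiff_eq hE hF, xorProb]
  linear_combination hEF + hFE - 2 * h

lemma volume_real_symmDiff_Icc {x y t : ℝ} (h : |x - y| ≤ 2 * t) :
    volume.real (Icc (x - t) (x + t) ∆ Icc (y - t) (y + t)) = 2 * |x - y| := by
  wlog hxy : x ≤ y generalizing x y
  · rw [symmDiff_comm, abs_sub_comm]
    exact this (by rwa [abs_sub_comm]) (by linarith)
  rw [abs_sub_comm, abs_of_nonneg (by linarith)] at h ⊢
  have hl : Icc (x - t) (x + t) \ Icc (y - t) (y + t) = Ico (x - t) (y - t) := by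
    ext a; simp only [mem_sdiff, mem_Icc, mem_Ico]; grind
  have hr : Icc (y - t) (y + t) \ Icc (x - t) (x + t) = Ioc (x + t) (y + t) := by
    ext a; simp only [mem_sdiff, mem_Icc, mem_Ioc]; grind
  rw [measureReal_symmDiff_eq measurableSet_Icc measurableSet_Icc measure_Icc_lt_top.ne
    measure_Icc_lt_top.ne, hl, hr,
    volume_real_Ico_of_le (by linarith), volume_real_Ioc_of_le (by linarith)]
  ring

lemma uniformIcc_real_of_subset {a b : ℝ} (hab : a ≤ b) {S : Set ℝ} (hS : S ⊆ Icc a b) :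
    (uniformIcc a b).real S = volume.real S / (b - a) := by
  rw [uniformIcc, measureReal_def, Measure.smul_apply, Measure.restrict_apply' measurableSet_Icc,
    inter_eq_self_of_subset_left hS, smul_eq_mul, ENNReal.toReal_mul, ENNReal.toReal_inv,
    ENNReal.toReal_ofReal (by linarith), div_eq_inv_mul, measureReal_def]

lemma uniformIcc_real_symmDiff_Icc {L U t x₁ x₂ : ℝ} (hx₁ : x₁ ∈ Icc L U) (hx₂ : x₂ ∈ Icc L U)
    (hd : |x₁ - x₂| ≤ 2 * t) :
    (uniformIcc (L - t) (U + t)).real (Icc (x₁ - t) (x₁ + t) ∆ Icc (x₂ - t) (x₂ + t))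
      = 2 * |x₁ - x₂| / (U - L + 2 * t) := by
  have ht : 0 ≤ t := by linarith [abs_nonneg (x₁ - x₂)]
  have hsub : ∀ x ∈ Icc L U, Icc (x - t) (x + t) ⊆ Icc (L - t) (U + t) := fun x hx ↦
    Icc_subset_Icc (by linarith [hx.1]) (by linarith [hx.2])
  rw [uniformIcc_real_of_subset (by linarith [hx₁.1, hx₁.2])
    (symmDiff_subset_union.trans (union_subset (hsub x₁ hx₁) (hsub x₂ hx₂))),
    volume_real_symmDiff_Icc hd]
  ring_nf

lemma setOf_bvHash_ne (t x₁ x₂ : ℝ) :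
    {a | bvHash t a x₁ ≠ bvHash t a x₂} = Icc (x₁ - t) (x₁ + t) ∆ Icc (x₂ - t) (x₂ + t) := by
  have hmem : ∀ a x, x ∈ Icc (a - t) (a + t) ↔ a ∈ Icc (x - t) (x + t) := by
    intro a x; simp only [mem_Icc]; constructor <;> rintro ⟨_, _⟩ <;> constructor <;> linarith
  ext a
  simp only [mem_ofPred_eq, bvHash, hmem, Set.mem_symmDiff]
  split_ifs <;> simp_all

lemma setOf_dpbvBit_ne {α : Type*} (t x₁ x₂ : ℝ) (r f g : α → ℝ) :
    {ω | dpbvBit t (r ω) x₁ (f ω) ≠ dpbvBit t (r ω) x₂ (g ω)}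
      = (r ⁻¹' (Icc (x₁ - t) (x₁ + t) ∆ Icc (x₂ - t) (x₂ + t))) ∆ ((f ⁻¹' {1}) ∆ (g ⁻¹' {1})) := by
  have h01 : ∀ a x, bvHash t a x = 0 ∨ bvHash t a x = 1 := fun a x ↦ by
    unfold bvHash; split_ifs <;> simp
  ext ω
  rw [← setOf_bvHash_ne]
  simp only [mem_ofPred_eq, Set.mem_symmDiff, mem_preimage, mem_singleton_iff]
  rcases h01 (r ω) x₁ with h₁ | h₁ <;> rcases h01 (r ω) x₂ with h₂ | h₂ <;>
    by_cases hf : f ω = 1 <;> by_cases hg : g ω = 1 <;> simp [dpbvBit, h₁, h₂, hf, hg]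

section Disagreement
variable {Ω : Type*} [MeasurableSpace Ω] {P : Measure Ω} (t x₁ x₂ : ℝ)

lemma measurableSet_setOf_dpbvBit_ne {r f g : Ω → ℝ} (hr : Measurable r) (hf : Measurable f)
    (hg : Measurable g) :
    MeasurableSet {ω | dpbvBit t (r ω) x₁ (f ω) ≠ dpbvBit t (r ω) x₂ (g ω)} := by
  rw [setOf_dpbvBit_ne]
  exact (hr (measurableSet_Icc.symmDiff measurableSet_Icc)).symmDiff
    ((hf (measurableSet_singleton 1)).symmDiff (hg (measurableSet_singleton 1)))

lemma measureReal_setOf_dpbvBit_ne [IsProbabilityMeasure P] {r f g : Ω → ℝ} (hr : Measurable r)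
    (hf : Measurable f) (hg : Measurable g) (hfg : IndepFun f g P)
    (hrfg : IndepFun r (fun ω ↦ (f ω, g ω)) P) :
    P.real {ω | dpbvBit t (r ω) x₁ (f ω) ≠ dpbvBit t (r ω) x₂ (g ω)}
      = xorProb (P.real (r ⁻¹' (Icc (x₁ - t) (x₁ + t) ∆ Icc (x₂ - t) (x₂ + t))))
          (xorProb (P.real (f ⁻¹' {1})) (P.real (g ⁻¹' {1}))) := by
  have h1 : MeasurableSet ({1} : Set ℝ) := measurableSet_singleton 1
  have hD : MeasurableSet (Icc (x₁ - t) (x₁ + t) ∆ Icc (x₂ - t) (x₂ + t)) :=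
    measurableSet_Icc.symmDiff measurableSet_Icc
  rw [setOf_dpbvBit_ne, measureReal_symmDiff_eq_xorProb (hr hD)
    ((hf h1).symmDiff (hg h1)) (hrfg.measureReal_inter_preimage_eq_mul hD
      ((measurable_fst h1).symmDiff (measurable_snd h1))),
    measureReal_symmDiff_eq_xorProb (hf h1) (hg h1)
      (hfg.measureReal_inter_preimage_eq_mul h1 h1)]

lemma measureReal_setOf_dpbvBit_ne_of_uniformIcc [IsProbabilityMeasure P] {L U p : ℝ}
    (hp : 0 ≤ p) {r f g : Ω → ℝ} (hr : Measurable r) (hf : Measurable f) (hg : Measurable g)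
    (hfg : IndepFun f g P) (hrfg : IndepFun r (fun ω ↦ (f ω, g ω)) P)
    (hrlaw : P.map r = uniformIcc (L - t) (U + t)) (hflaw : P {ω | f ω = 1} = ENNReal.ofReal p)
    (hglaw : P {ω | g ω = 1} = ENNReal.ofReal p) (hx₁ : x₁ ∈ Icc L U) (hx₂ : x₂ ∈ Icc L U)
    (hd : |x₁ - x₂| ≤ 2 * t) :
    P.real {ω | dpbvBit t (r ω) x₁ (f ω) ≠ dpbvBit t (r ω) x₂ (g ω)}
      = xorProb (2 * |x₁ - x₂| / (U - L + 2 * t)) (xorProb p p) := by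
  have hp1 : ∀ {X : Ω → ℝ}, P {ω | X ω = 1} = ENNReal.ofReal p → P.real (X ⁻¹' {1}) = p :=
    fun h ↦ (congrArg ENNReal.toReal h).trans (ENNReal.toReal_ofReal hp)
  rw [measureReal_setOf_dpbvBit_ne t x₁ x₂ hr hf hg hfg hrfg,
    ← map_measureReal_apply hr (measurableSet_Icc.symmDiff measurableSet_Icc), hrlaw,
    uniformIcc_real_symmDiff_Icc hx₁ hx₂ hd, hp1 hflaw, hp1 hglaw]

lemma iIndepFun_indicator_setOf_dpbvBit_ne {ι : Type*} {r f g : ι → Ω → ℝ}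
    (hZ : ∀ j, Measurable (Sum.elim r (Sum.elim f g) j))
    (hindep : iIndepFun (Sum.elim r (Sum.elim f g)) P) :
    iIndepFun (fun i ↦ {ω | dpbvBit t (r i ω) x₁ (f i ω) ≠ dpbvBit t (r i ω) x₂ (g i ω)}.indicator
      (1 : Ω → ℝ)) P := by
  let φ : ι ⊕ (ι ⊕ ι) → ι := Sum.elim id (Sum.elim id id)
  refine (hindep.fiberwise hZ φ).comp
    (fun i v ↦ {v : {j // φ j = i} → ℝ | dpbvBit t (v ⟨.inl i, rfl⟩) x₁ (v ⟨.inr (.inl i), rfl⟩)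
      ≠ dpbvBit t (v ⟨.inl i, rfl⟩) x₂ (v ⟨.inr (.inr i), rfl⟩)}.indicator 1 v) fun i ↦ ?_
  exact measurable_const.indicator (measurableSet_setOf_dpbvBit_ne t x₁ x₂
    (measurable_pi_apply _) (measurable_pi_apply _) (measurable_pi_apply _))

end Disagreement

lemma dpbvHammingDist_eq_sum_indicator {Ω : Type*} {s : ℕ} (t : ℝ) (r f g : Fin s → Ω → ℝ)
    (x₁ x₂ : ℝ) (ω : Ω) :
    (dpbvHammingDist t r f g x₁ x₂ ω : ℝ) = ∑ i, {ω | dpbvBit t (r i ω) x₁ (f i ω)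
      ≠ dpbvBit t (r i ω) x₂ (g i ω)}.indicator (1 : Ω → ℝ) ω := by
  simp [dpbvHammingDist, Finset.natCast_card_filter, indicator_apply]

lemma dpbvEstimator_sub_eq {Ω : Type*} {s : ℕ} (hs : s ≠ 0) {ε μ : ℝ} (hε : 0 < ε) (hμ : μ ≠ 0)
    (t : ℝ) (r f g : Fin s → Ω → ℝ) (x₁ x₂ d : ℝ) (ω : Ω) :
    dpbvEstimator t μ ε r f g x₁ x₂ ω - d
      = μ / (2 * s) * ((exp ε + 1) / (exp ε - 1)) ^ 2 * (dpbvHammingDist t r f g x₁ x₂ ω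
          - s * xorProb (2 * d / μ) (xorProb (1 / (exp ε + 1)) (1 / (exp ε + 1)))) := by
  have hE : exp ε - 1 ≠ 0 := (sub_pos.mpr (one_lt_exp_iff.mpr hε)).ne'
  have hE' : exp ε + 1 ≠ 0 := by positivity
  unfold dpbvEstimator xorProb
  field_simp
  ring

lemma le_abs_dpbvEstimator_sub_iff {Ω : Type*} {s : ℕ} (hs : s ≠ 0) {ε μ : ℝ} (hε : 0 < ε)
    (hμ : 0 < μ) (t θ : ℝ) (r f g : Fin s → Ω → ℝ) (x₁ x₂ d : ℝ) (ω : Ω) :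
    θ * μ ≤ |dpbvEstimator t μ ε r f g x₁ x₂ ω - d|
      ↔ s * (2 * θ * ((exp ε - 1) / (exp ε + 1)) ^ 2) ≤ |dpbvHammingDist t r f g x₁ x₂ ω
          - s * xorProb (2 * d / μ) (xorProb (1 / (exp ε + 1)) (1 / (exp ε + 1)))| := by
  have hE : 0 < exp ε - 1 := sub_pos.mpr (one_lt_exp_iff.mpr hε)
  have ha : 0 < μ / (2 * s) * ((exp ε + 1) / (exp ε - 1)) ^ 2 := by positivity
  have hθμ : θ * μ = μ / (2 * s) * ((exp ε + 1) / (exp ε - 1)) ^ 2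
      * (s * (2 * θ * ((exp ε - 1) / (exp ε + 1)) ^ 2)) := by
    field_simp
  rw [hθμ, dpbvEstimator_sub_eq hs hε hμ.ne', abs_mul, abs_of_pos ha, mul_le_mul_iff_right₀ ha]

theorem dpbv_estimator_concentration_general
    {Ω : Type*} [MeasurableSpace Ω] (P : Measure Ω) [IsProbabilityMeasure P]
    (L U t μ ε θ : ℝ) (ht : 0 < t) (hε : 0 < ε) (hθ : 0 < θ)
    (hμ : μ = U - L + 2 * t)
    (s : ℕ) (hs : 1 ≤ s) (r f g : Fin s → Ω → ℝ)
    (hr : ∀ i, Measurable (r i)) (hf : ∀ i, Measurable (f i)) (hg : ∀ i, Measurable (g i))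
    (hrlaw : ∀ i, Measure.map (r i) P = uniformIcc (L - t) (U + t))
    (hflaw : ∀ i, P {ω | f i ω = 1} = ENNReal.ofReal (1 / (exp ε + 1)))
    (hglaw : ∀ i, P {ω | g i ω = 1} = ENNReal.ofReal (1 / (exp ε + 1)))
    (hindep : iIndepFun (m := fun _ : Fin s ⊕ (Fin s ⊕ Fin s) => (inferInstance : MeasurableSpace ℝ))
      (Sum.elim r (Sum.elim f g)) P)
    (x₁ x₂ : ℝ) (hx₁ : x₁ ∈ Set.Icc L U) (hx₂ : x₂ ∈ Set.Icc L U)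
    (hd : |x₁ - x₂| ≤ 2 * t) :
    P {ω | θ * μ ≤ abs (dpbvEstimator t μ ε r f g x₁ x₂ ω - |x₁ - x₂|)}
      ≤ ENNReal.ofReal (2 * exp (-8 * ((exp ε - 1) / (exp ε + 1)) ^ 4 * s * θ ^ 2)) := by
  subst hμ
  set p := 1 / (exp ε + 1)
  set A : Fin s → Set Ω := fun i ↦
    {ω | dpbvBit t (r i ω) x₁ (f i ω) ≠ dpbvBit t (r i ω) x₂ (g i ω)}
  have hμ : 0 < U - L + 2 * t := by linarith [hx₁.1, hx₁.2]
  have hZ : ∀ j, Measurable (Sum.elim r (Sum.elim f g) j) := by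
    rintro (j | j | j) <;> simp [hr, hf, hg]
  have hA : ∀ i, MeasurableSet (A i) :=
    fun i ↦ measurableSet_setOf_dpbvBit_ne t x₁ x₂ (hr i) (hf i) (hg i)
  have hprob : ∀ i, P.real (A i) = xorProb (2 * |x₁ - x₂| / (U - L + 2 * t)) (xorProb p p) :=
    fun i ↦ measureReal_setOf_dpbvBit_ne_of_uniformIcc t x₁ x₂ (by positivity) (hr i) (hf i) (hg i)
      (hindep.indepFun (i := .inr (.inl i)) (j := .inr (.inr i)) (by simp))
      (hindep.indepFun_prodMk hZ (.inr (.inl i)) (.inr (.inr i)) (.inl i) (by simp)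
        (by simp)).symm (hrlaw i) (hflaw i) (hglaw i) hx₁ hx₂ hd
  have hevent : {ω | θ * (U - L + 2 * t)
        ≤ abs (dpbvEstimator t (U - L + 2 * t) ε r f g x₁ x₂ ω - |x₁ - x₂|)}
      = {ω | s * (2 * θ * ((exp ε - 1) / (exp ε + 1)) ^ 2)
        ≤ |∑ i, ((A i).indicator 1 ω - P.real (A i))|} := by
    ext ω
    rw [mem_ofPred_eq, mem_ofPred_eq, le_abs_dpbvEstimator_sub_iff (by omega) hε hμ,
      dpbvHammingDist_eq_sum_indicator, Finset.sum_sub_distrib]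
    simp only [hprob, Finset.sum_const, Finset.card_univ, Fintype.card_fin, nsmul_eq_mul, A]
    rfl
  rw [hevent, ← ofReal_measureReal]
  refine ENNReal.ofReal_le_ofReal ((measureReal_abs_sum_indicator_sub_ge_le hA
    (iIndepFun_indicator_setOf_dpbvBit_ne t x₁ x₂ hZ hindep) (by positivity)).trans_eq ?_)
  rw [Fintype.card_fin]
  field_simp
  ring_nf

/-- For `L < U`, `t > 0`, `ε > 0`, `θ > 0`, `μ = U - L + 2t`, with `r 0, …, r (s-1)` i.i.d.
uniform on `[L - t, U + t]`, flip indicators `f i, g i ∈ {0,1}` each equal to `1` with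
probability `1/(e^ε + 1)`, all mutually independent, and `x₁, x₂ ∈ [L, U]` with
`d_E = |x₁ - x₂| ≤ 2t`, the estimator `d̂_E` satisfies the concentration bound
`Pr[|d̂_E − d_E| ≥ θμ] ≤ 2 · exp(−8 · ((e^ε − 1)/(e^ε + 1))⁴ · s · θ²)`. -/
theorem dpbv_estimator_concentration
    {Ω : Type*} [MeasurableSpace Ω] (P : Measure Ω) [IsProbabilityMeasure P]
    (L U t μ ε θ : ℝ) (hLU : L < U) (ht : 0 < t) (hε : 0 < ε) (hθ : 0 < θ)
    (hμ : μ = U - L + 2 * t)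
    (s : ℕ) (hs : 1 ≤ s) (r f g : Fin s → Ω → ℝ)
    (hr : ∀ i, Measurable (r i)) (hf : ∀ i, Measurable (f i)) (hg : ∀ i, Measurable (g i))
    (hrlaw : ∀ i, Measure.map (r i) P = uniformIcc (L - t) (U + t))
    (hf01 : ∀ i ω, f i ω = 0 ∨ f i ω = 1) (hg01 : ∀ i ω, g i ω = 0 ∨ g i ω = 1)
    (hflaw : ∀ i, P {ω | f i ω = 1} = ENNReal.ofReal (1 / (exp ε + 1)))
    (hglaw : ∀ i, P {ω | g i ω = 1} = ENNReal.ofReal (1 / (exp ε + 1)))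
    (hindep : iIndepFun (m := fun _ : Fin s ⊕ (Fin s ⊕ Fin s) => (inferInstance : MeasurableSpace ℝ))
      (Sum.elim r (Sum.elim f g)) P)
    (x₁ x₂ : ℝ) (hx₁ : x₁ ∈ Set.Icc L U) (hx₂ : x₂ ∈ Set.Icc L U)
    (hd : |x₁ - x₂| ≤ 2 * t) :
    P {ω | θ * μ ≤ abs (dpbvEstimator t μ ε r f g x₁ x₂ ω - |x₁ - x₂|)}
      ≤ ENNReal.ofReal (2 * exp (-8 * ((exp ε - 1) / (exp ε + 1)) ^ 4 * s * θ ^ 2)) :=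
  dpbv_estimator_concentration_general P L U t μ ε θ ht hε hθ hμ s hs r f g hr hf hg hrlaw hflaw
    hglaw hindep x₁ x₂ hx₁ hx₂ hd
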